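/- arXiv:2202.06340 — 4 statements merged into one kernel-verified Lean document; each statement's English description precedes it below -/
import Mathlib

section
/- Let I = (0,1) and let ρ₀ : [0,1] → ℝ be defined by ρ₀(x) = x for x ∈ [0,1/2] and ρ₀(x) = 1 - x for x ∈ [1/2,1]. Then for every g ∈ C¹([0,1]), ∫₀^{1/2} g(x)² dx ≤ C (∫₀¹ ρ₀ g² dx)^{1/2} (∫₀¹ ρ₀ (g² + (g')²) dx)^{1/2} for some absolute constant C > 0. -/
open Set MeasureTheory Filter Topology

/-!
The weight `x (1 - 2x)` vanishes at both ends of `[0, 1/2]`, so integrating the derivative of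
`x (1 - 2x) g²` gives `∫₀^{1/2} g² = 4 ∫₀^{1/2} x g² - 2 ∫₀^{1/2} x (1 - 2x) g g'` with no
boundary terms. By AM-GM, `|2 x (1 - 2x) g g'| ≤ x (t g² + g'² / t)` for every `t > 0`, and
optimising in `t` yields `∫₀^{1/2} g² ≤ 4 B + 2 √B √D` with `B = ∫₀^{1/2} x g²` and
`D = ∫₀^{1/2} x g'²`. Since `x = ρ₀ x` on `[0, 1/2]`, both `B` and `D` are dominated by the
weighted integrals over `[0, 1]`, which gives the inequality with `C = 6`.
-/

theorem le_two_mul_sqrt_mul_sqrt_of_forall_le {a b c : ℝ} (hb : 0 ≤ b) (hc : 0 ≤ c)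
    (h : ∀ t > 0, a ≤ t * b + c / t) : a ≤ 2 * √b * √c := by
  -- Perturbing `b` and `c` makes the optimal `t = √c / √b` available even when `b = 0`.
  have hε : ∀ ε > 0, a ≤ 2 * √(b + ε) * √(c + ε) := by
    intro ε hε
    have hb' : 0 < √(b + ε) := Real.sqrt_pos.2 (by linarith)
    have hc' : 0 < √(c + ε) := Real.sqrt_pos.2 (by linarith)
    have ht : 0 < √(c + ε) / √(b + ε) := div_pos hc' hb'
    calc a ≤ √(c + ε) / √(b + ε) * b + c / (√(c + ε) / √(b + ε)) := h _ ht
      _ ≤ √(c + ε) / √(b + ε) * (b + ε) + (c + ε) / (√(c + ε) / √(b + ε)) := by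
        gcongr <;> linarith
      _ = 2 * √(b + ε) * √(c + ε) := by
        rw [← Real.sq_sqrt (show 0 ≤ b + ε by linarith),
          ← Real.sq_sqrt (show 0 ≤ c + ε by linarith)]
        field_simp
        simp only [Real.sqrt_sq hb'.le, Real.sqrt_sq hc'.le]
        ring
  have hlim : Tendsto (fun ε => 2 * √(b + ε) * √(c + ε)) (𝓝[>] 0) (𝓝 (2 * √b * √c)) := by
    have hcont : Continuous fun ε => 2 * √(b + ε) * √(c + ε) := by fun_prop
    simpa using (hcont.tendsto 0).mono_left nhdsWithin_le_nhds
  exact ge_of_tendsto hlim (eventually_nhdsWithin_of_forall hε)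

theorem integral_sq_eq_integral_sub_of_hasDerivAt {g g' : ℝ → ℝ}
    (hgc : ContinuousOn g (Icc 0 (1 / 2)))
    (hg : ∀ x ∈ Ioo (0 : ℝ) (1 / 2), HasDerivAt g (g' x) x)
    (hg' : IntervalIntegrable g' volume 0 (1 / 2)) :
    ∫ x in (0 : ℝ)..(1 / 2), g x ^ 2 =
      ∫ x in (0 : ℝ)..(1 / 2), (4 * x * g x ^ 2 - x * (1 - 2 * x) * (2 * g x * g' x)) := by
  have hI : uIcc (0 : ℝ) (1 / 2) = Icc 0 (1 / 2) := uIcc_of_le (by norm_num)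
  have hIoo : Ioo (min (0 : ℝ) (1 / 2)) (max 0 (1 / 2)) = Ioo 0 (1 / 2) := by norm_num
  have hv : ContinuousOn (fun x => g x ^ 2) (uIcc 0 (1 / 2)) := hI ▸ hgc.pow 2
  have hv' : IntervalIntegrable (fun x => 2 * g x * g' x) volume 0 (1 / 2) :=
    ((hg'.continuousOn_mul (hI ▸ hgc)).const_mul 2).congr fun x _ => by ring
  have hu : ContinuousOn (fun x : ℝ => x * (1 - 2 * x)) (uIcc 0 (1 / 2)) := by fun_prop
  have hboundary := intervalIntegral.integral_deriv_mul_eq_sub_of_hasDerivAt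
    (u' := fun x => 1 - 4 * x) hu hv
    (fun x _ => ((hasDerivAt_id' x).mul (((hasDerivAt_id' x).const_mul 2).const_sub 1)).congr_deriv
      (by ring))
    (fun x hx => ((hg x (hIoo ▸ hx)).pow 2).congr_deriv (by ring))
    (by apply Continuous.intervalIntegrable; fun_prop) hv'
  have hsq : IntervalIntegrable (fun x => g x ^ 2) volume 0 (1 / 2) := hv.intervalIntegrable
  have hrhs : IntervalIntegrable
      (fun x => 4 * x * g x ^ 2 - x * (1 - 2 * x) * (2 * g x * g' x)) volume 0 (1 / 2) :=
    (hsq.continuousOn_mul (by fun_prop : ContinuousOn (fun x : ℝ => 4 * x) _)).sub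
      (hv'.continuousOn_mul hu) |>.congr fun x _ => by ring
  norm_num at hboundary
  rw [← sub_eq_zero, ← intervalIntegral.integral_sub hsq hrhs]
  exact (intervalIntegral.integral_congr fun x _ => by ring).trans hboundary

theorem integral_sq_le_of_hasDerivAt {g g' : ℝ → ℝ}
    (hgc : ContinuousOn g (Icc 0 (1 / 2)))
    (hg : ∀ x ∈ Ioo (0 : ℝ) (1 / 2), HasDerivAt g (g' x) x)
    (hg' : ContinuousOn g' (Icc 0 (1 / 2))) {t : ℝ} (ht : 0 < t) :
    ∫ x in (0 : ℝ)..(1 / 2), g x ^ 2 ≤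
      (4 + t) * (∫ x in (0 : ℝ)..(1 / 2), x * g x ^ 2) +
        (∫ x in (0 : ℝ)..(1 / 2), x * g' x ^ 2) / t := by
  have hI : (0 : ℝ) ≤ 1 / 2 := by norm_num
  have hpt : ∀ x ∈ Icc (0 : ℝ) (1 / 2), 4 * x * g x ^ 2 - x * (1 - 2 * x) * (2 * g x * g' x) ≤
      (4 + t) * (x * g x ^ 2) + x * g' x ^ 2 / t := by
    rintro x ⟨hx0, hx1⟩
    have hw : 0 ≤ x * (1 - 2 * x) := mul_nonneg hx0 (by linarith)
    rw [← sub_nonneg]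
    calc 0 ≤ (x * (1 - 2 * x) * (t * g x + g' x) ^ 2 +
          2 * x ^ 2 * ((t * g x) ^ 2 + g' x ^ 2)) / t := by positivity
      _ = _ := by field_simp; ring
  have hB : IntervalIntegrable (fun x => x * g x ^ 2) volume 0 (1 / 2) :=
    ContinuousOn.intervalIntegrable_of_Icc hI (by fun_prop)
  have hD : IntervalIntegrable (fun x => x * g' x ^ 2) volume 0 (1 / 2) :=
    ContinuousOn.intervalIntegrable_of_Icc hI (by fun_prop)
  calc ∫ x in (0 : ℝ)..(1 / 2), g x ^ 2
      = ∫ x in (0 : ℝ)..(1 / 2), (4 * x * g x ^ 2 - x * (1 - 2 * x) * (2 * g x * g' x)) :=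
        integral_sq_eq_integral_sub_of_hasDerivAt hgc hg (hg'.intervalIntegrable_of_Icc hI)
    _ ≤ ∫ x in (0 : ℝ)..(1 / 2), ((4 + t) * (x * g x ^ 2) + x * g' x ^ 2 / t) :=
        intervalIntegral.integral_mono_on hI
          (ContinuousOn.intervalIntegrable_of_Icc hI (by fun_prop))
          ((hB.const_mul _).add (hD.div_const _)) hpt
    _ = _ := by
      rw [intervalIntegral.integral_add (hB.const_mul _) (hD.div_const _),
        intervalIntegral.integral_const_mul, intervalIntegral.integral_div]

theorem integral_mul_le_integral_min_mul {f : ℝ → ℝ} (hf : IntervalIntegrable f volume 0 1)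
    (hf0 : ∀ x ∈ Icc (1 / 2 : ℝ) 1, 0 ≤ f x) :
    ∫ x in (0 : ℝ)..(1 / 2), x * f x ≤ ∫ x in (0 : ℝ)..1, min x (1 - x) * f x := by
  have hρf : IntervalIntegrable (fun x => min x (1 - x) * f x) volume 0 1 :=
    hf.continuousOn_mul (by fun_prop)
  have hleft : ∫ x in (0 : ℝ)..(1 / 2), min x (1 - x) * f x = ∫ x in (0 : ℝ)..(1 / 2), x * f x :=
    intervalIntegral.integral_congr fun x hx => by
      rw [uIcc_of_le (by norm_num)] at hx
      rw [min_eq_left (by linarith [hx.2])]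
  have hright : 0 ≤ ∫ x in (1 / 2 : ℝ)..1, min x (1 - x) * f x :=
    intervalIntegral.integral_nonneg (by norm_num) fun x hx =>
      mul_nonneg (le_min (by linarith [hx.1]) (by linarith [hx.2])) (hf0 x hx)
  rw [← intervalIntegral.integral_add_adjacent_intervals (b := 1 / 2)
    (hρf.mono_set (uIcc_subset_uIcc_left (by norm_num [mem_uIcc])))
    (hρf.mono_set (uIcc_subset_uIcc_right (by norm_num [mem_uIcc]))), hleft]
  linarith

theorem integral_min_mul_mono {f h : ℝ → ℝ} (hf : IntervalIntegrable f volume 0 1)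
    (hh : IntervalIntegrable h volume 0 1) (hfh : ∀ x ∈ Icc (0 : ℝ) 1, f x ≤ h x) :
    ∫ x in (0 : ℝ)..1, min x (1 - x) * f x ≤ ∫ x in (0 : ℝ)..1, min x (1 - x) * h x :=
  intervalIntegral.integral_mono_on zero_le_one (hf.continuousOn_mul (by fun_prop))
    (hh.continuousOn_mul (by fun_prop))
    fun x hx => mul_le_mul_of_nonneg_left (hfh x hx) (le_min hx.1 (by linarith [hx.2]))

/-- Half of the weighted interpolation inequality (Lemma 7.2 of the paper):
with `ρ₀ x = min x (1-x)` on `[0,1]`, for `g ∈ C¹([0,1])`,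
`∫₀^{1/2} g² ≤ C ‖g‖_{L²_{ρ₀}} ‖g‖_{H¹_{ρ₀}}`. -/
theorem weighted_interpolation_half :
    ∃ C : ℝ, 0 < C ∧
      ∀ g g' : ℝ → ℝ,
        (∀ x ∈ Icc (0:ℝ) 1, HasDerivWithinAt g (g' x) (Icc (0:ℝ) 1) x) →
        ContinuousOn g' (Icc (0:ℝ) 1) →
        (∫ x in (0:ℝ)..(1/2), (g x) ^ 2) ≤
          C * Real.sqrt (∫ x in (0:ℝ)..1, min x (1 - x) * (g x) ^ 2) *
            Real.sqrt (∫ x in (0:ℝ)..1, min x (1 - x) * ((g x) ^ 2 + (g' x) ^ 2)) := by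
  refine ⟨6, by norm_num, fun g g' hg hg' => ?_⟩
  have hsub : Icc (0 : ℝ) (1 / 2) ⊆ Icc 0 1 := Icc_subset_Icc_right (by norm_num)
  have hgc : ContinuousOn g (Icc 0 1) := fun x hx => (hg x hx).continuousWithinAt
  have hg_interior : ∀ x ∈ Ioo (0 : ℝ) (1 / 2), HasDerivAt g (g' x) x := fun x hx =>
    (hg x (hsub (Ioo_subset_Icc_self hx))).hasDerivAt (Icc_mem_nhds hx.1 (by linarith [hx.2]))
  have hsq : IntervalIntegrable (fun x => g x ^ 2) volume 0 1 :=
    ContinuousOn.intervalIntegrable_of_Icc zero_le_one (by fun_prop)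
  have hsq' : IntervalIntegrable (fun x => g' x ^ 2) volume 0 1 :=
    ContinuousOn.intervalIntegrable_of_Icc zero_le_one (by fun_prop)
  set A := ∫ x in (0 : ℝ)..(1 / 2), g x ^ 2
  set B := ∫ x in (0 : ℝ)..(1 / 2), x * g x ^ 2
  set D := ∫ x in (0 : ℝ)..(1 / 2), x * g' x ^ 2
  set X := ∫ x in (0 : ℝ)..1, min x (1 - x) * g x ^ 2
  set Y := ∫ x in (0 : ℝ)..1, min x (1 - x) * (g x ^ 2 + g' x ^ 2)
  have hBX : B ≤ X := integral_mul_le_integral_min_mul hsq fun x _ => sq_nonneg _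
  have hXY : X ≤ Y := integral_min_mul_mono hsq (hsq.add hsq') fun x _ =>
    le_add_of_nonneg_right (sq_nonneg _)
  have hDY : D ≤ Y := (integral_mul_le_integral_min_mul hsq' fun x _ => sq_nonneg _).trans
    (integral_min_mul_mono hsq' (hsq.add hsq') fun x _ => le_add_of_nonneg_left (sq_nonneg _))
  have hB0 : 0 ≤ B := intervalIntegral.integral_nonneg (by norm_num) fun x hx =>
    mul_nonneg hx.1 (sq_nonneg _)
  have hD0 : 0 ≤ D := intervalIntegral.integral_nonneg (by norm_num) fun x hx =>
    mul_nonneg hx.1 (sq_nonneg _)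
  have hA : A - 4 * B ≤ 2 * √B * √D :=
    le_two_mul_sqrt_mul_sqrt_of_forall_le hB0 hD0 fun t ht => by
      linarith [integral_sq_le_of_hasDerivAt (hgc.mono hsub) hg_interior (hg'.mono hsub) ht]
  have hBY : B ≤ Y := hBX.trans hXY
  calc A ≤ 4 * (√B * √B) + 2 * √B * √D := by rw [Real.mul_self_sqrt hB0]; linarith
    _ ≤ 4 * (√X * √Y) + 2 * √X * √Y := by gcongr
    _ = 6 * √X * √Y := by ring
end

section
/- Let I = (0,1) and ρ₀(x) = min(x, 1-x). Then there is a constant C > 0 such that for all g ∈ C¹([0,1]), ∫₀¹ g(x)² dx ≤ C (∫₀¹ ρ₀ g² dx)^{1/2} (∫₀¹ ρ₀ (g² + (g')²) dx)^{1/2}. -/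
/-!
Integrate `(F g²)' = F' g² + 2 F g g'` over `[0, 1]` against the multiplier
`F x = x (1 - x) (1 - 2 x)`. It vanishes at both ends, and `|F| ≤ x (1 - x) ≤ ρ₀` and
`1 - F' = 6 x (1 - x) ≤ 6 ρ₀`, so `∫ g² ≤ 6 ∫ ρ₀ g² + 2 ∫ ρ₀ |g| |g'|`. By Cauchy–Schwarz both
`∫ ρ₀ |g| |g'|` and `∫ ρ₀ g²` are at most `(∫ ρ₀ g²)^{1/2} (∫ ρ₀ (g² + g'²))^{1/2}`, so `C = 8`
works.
-/

open Set Filter Topology MeasureTheory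

lemma le_two_mul_sqrt_mul_sqrt_of_le_mul_add_div {P A B : ℝ} (hA : 0 ≤ A) (hB : 0 ≤ B)
    (h : ∀ t > 0, P ≤ t * A + B / t) : P ≤ 2 * √A * √B := by
  -- the optimal `t = √(B / A)`, after perturbing `A` and `B` to make it admissible
  have hδ : ∀ δ > 0, P ≤ 2 * √(A + δ) * √(B + δ) := by
    intro δ hδ
    have hs : 0 < √(A + δ) := Real.sqrt_pos.2 (by linarith)
    have hr : 0 < √(B + δ) := Real.sqrt_pos.2 (by linarith)
    calc P ≤ √(B + δ) / √(A + δ) * A + B / (√(B + δ) / √(A + δ)) := h _ (by positivity)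
      _ ≤ √(B + δ) / √(A + δ) * √(A + δ) ^ 2 + √(B + δ) ^ 2 / (√(B + δ) / √(A + δ)) := by
        rw [Real.sq_sqrt (by linarith), Real.sq_sqrt (by linarith)]
        gcongr <;> linarith
      _ = 2 * √(A + δ) * √(B + δ) := by field_simp; ring
  have hlim : Tendsto (fun δ => 2 * √(A + δ) * √(B + δ)) (𝓝[>] 0) (𝓝 (2 * √A * √B)) := by
    have hc : Continuous (fun δ => 2 * √(A + δ) * √(B + δ)) := by fun_prop
    simpa using (hc.tendsto 0).mono_left nhdsWithin_le_nhds
  exact ge_of_tendsto hlim (eventually_nhdsWithin_of_forall hδ)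

lemma intervalIntegral.integral_mul_mul_le_sqrt_mul_sqrt {a b : ℝ} {w u v : ℝ → ℝ}
    (hab : a ≤ b) (hw : ContinuousOn w (Icc a b)) (hu : ContinuousOn u (Icc a b))
    (hv : ContinuousOn v (Icc a b)) (hw0 : ∀ x ∈ Icc a b, 0 ≤ w x) :
    ∫ x in a..b, w x * (u x * v x) ≤
      √(∫ x in a..b, w x * u x ^ 2) * √(∫ x in a..b, w x * v x ^ 2) := by
  have hint {f : ℝ → ℝ} (hf : ContinuousOn f (Icc a b)) : IntervalIntegrable f volume a b :=
    hf.intervalIntegrable_of_Icc hab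
  have huu : IntervalIntegrable (fun x => w x * u x ^ 2) volume a b := hint (by fun_prop)
  have hvv : IntervalIntegrable (fun x => w x * v x ^ 2) volume a b := hint (by fun_prop)
  have huv : IntervalIntegrable (fun x => w x * (u x * v x)) volume a b := hint (by fun_prop)
  have hA : 0 ≤ ∫ x in a..b, w x * u x ^ 2 :=
    integral_nonneg hab fun x hx => mul_nonneg (hw0 x hx) (sq_nonneg _)
  have hB : 0 ≤ ∫ x in a..b, w x * v x ^ 2 :=
    integral_nonneg hab fun x hx => mul_nonneg (hw0 x hx) (sq_nonneg _)
  suffices 2 * ∫ x in a..b, w x * (u x * v x) ≤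
      2 * √(∫ x in a..b, w x * u x ^ 2) * √(∫ x in a..b, w x * v x ^ 2) by linarith
  refine le_two_mul_sqrt_mul_sqrt_of_le_mul_add_div hA hB fun t ht => ?_
  rw [← integral_const_mul, ← integral_const_mul, ← integral_div,
    ← integral_add (huu.const_mul t) (hvv.div_const t)]
  refine integral_mono_on hab (huv.const_mul 2) ((huu.const_mul t).add (hvv.div_const t))
    fun x hx => ?_
  have hsq : t * (w x * u x ^ 2) + w x * v x ^ 2 / t - 2 * (w x * (u x * v x)) =
      w x * (t * u x - v x) ^ 2 / t := by
    field_simp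
    ring
  have : 0 ≤ w x * (t * u x - v x) ^ 2 / t := by have := hw0 x hx; positivity
  linarith

lemma sq_sub_multiplier_deriv_le_weighted {x : ℝ} (hx : x ∈ Icc (0:ℝ) 1) (a b : ℝ) :
    a ^ 2 - ((1 - 6 * x + 6 * x ^ 2) * a ^ 2 + x * (1 - x) * (1 - 2 * x) * (2 * a * b)) ≤
      6 * (min x (1 - x) * a ^ 2) + 2 * (min x (1 - x) * (|a| * |b|)) := by
  obtain ⟨hx0, hx1⟩ := hx
  have hρx : x * (1 - x) ≤ min x (1 - x) := le_min (by nlinarith) (by nlinarith)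
  have hF : |x * (1 - x) * (1 - 2 * x)| ≤ x * (1 - x) := by
    rw [abs_le]; constructor <;> nlinarith [mul_nonneg hx0 (sub_nonneg.2 hx1)]
  have h1 : 6 * (x * (1 - x)) * a ^ 2 ≤ 6 * min x (1 - x) * a ^ 2 := by gcongr
  have h2 : -(x * (1 - x) * (1 - 2 * x) * (a * b)) ≤
      |x * (1 - x) * (1 - 2 * x)| * (|a| * |b|) := by
    rw [← abs_mul, ← abs_mul]; exact neg_le_abs _
  have h3 : |x * (1 - x) * (1 - 2 * x)| * (|a| * |b|) ≤ min x (1 - x) * (|a| * |b|) := by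
    gcongr; exact hF.trans hρx
  linear_combination h1 + 2 * h2 + 2 * h3

lemma integral_sq_le_weighted {g g' : ℝ → ℝ}
    (hg : ∀ x ∈ Icc (0:ℝ) 1, HasDerivWithinAt g (g' x) (Icc (0:ℝ) 1) x)
    (hg' : ContinuousOn g' (Icc (0:ℝ) 1)) :
    ∫ x in (0:ℝ)..1, g x ^ 2 ≤
      6 * (∫ x in (0:ℝ)..1, min x (1 - x) * g x ^ 2) +
        2 * ∫ x in (0:ℝ)..1, min x (1 - x) * (|g x| * |g' x|) := by
  set F : ℝ → ℝ := fun x => x * (1 - x) * (1 - 2 * x)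
  set F' : ℝ → ℝ := fun x => 1 - 6 * x + 6 * x ^ 2
  have hgc : ContinuousOn g (Icc 0 1) := fun x hx => (hg x hx).continuousWithinAt
  have hint {f : ℝ → ℝ} (hf : ContinuousOn f (Icc 0 1)) : IntervalIntegrable f volume 0 1 :=
    hf.intervalIntegrable_of_Icc zero_le_one
  have hg2 : IntervalIntegrable (fun x => g x ^ 2) volume 0 1 := hint (by fun_prop)
  have hFg : IntervalIntegrable (fun x => F' x * g x ^ 2 + F x * (2 * g x * g' x)) volume 0 1 :=
    hint (by fun_prop)
  have hρg : IntervalIntegrable (fun x => min x (1 - x) * g x ^ 2) volume 0 1 :=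
    hint (by fun_prop)
  have hρgg' : IntervalIntegrable (fun x => min x (1 - x) * (|g x| * |g' x|)) volume 0 1 :=
    hint (by fun_prop)
  have ibp : ∫ x in (0:ℝ)..1, (F' x * g x ^ 2 + F x * (2 * g x * g' x)) = 0 := by
    have hderiv : ∀ x ∈ Ioo (0:ℝ) 1,
        HasDerivAt (fun y => F y * g y ^ 2) (F' x * g x ^ 2 + F x * (2 * g x * g' x)) x := by
      intro x hx
      have hgx := (hg x (Ioo_subset_Icc_self hx)).hasDerivAt (Icc_mem_nhds hx.1 hx.2)
      have hFx : HasDerivAt F (F' x) x :=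
        (((hasDerivAt_id' x).fun_mul ((hasDerivAt_id' x).const_sub 1)).fun_mul
          (((hasDerivAt_id' x).const_mul 2).const_sub 1)).congr_deriv (by simp only [F']; ring)
      exact (hFx.fun_mul (hgx.fun_pow 2)).congr_deriv (by ring)
    rw [intervalIntegral.integral_eq_sub_of_hasDerivAt_of_le zero_le_one (by fun_prop) hderiv hFg]
    simp [F]
  calc ∫ x in (0:ℝ)..1, g x ^ 2
      = ∫ x in (0:ℝ)..1, (g x ^ 2 - (F' x * g x ^ 2 + F x * (2 * g x * g' x))) := by
        rw [intervalIntegral.integral_sub hg2 hFg, ibp, sub_zero]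
    _ ≤ ∫ x in (0:ℝ)..1,
          (6 * (min x (1 - x) * g x ^ 2) + 2 * (min x (1 - x) * (|g x| * |g' x|))) := by
        exact intervalIntegral.integral_mono_on zero_le_one (hg2.sub hFg)
          ((hρg.const_mul 6).add (hρgg'.const_mul 2)) fun x hx =>
          sq_sub_multiplier_deriv_le_weighted hx _ _
    _ = 6 * (∫ x in (0:ℝ)..1, min x (1 - x) * g x ^ 2) +
          2 * ∫ x in (0:ℝ)..1, min x (1 - x) * (|g x| * |g' x|) := by
        rw [intervalIntegral.integral_add (hρg.const_mul 6) (hρgg'.const_mul 2),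
          intervalIntegral.integral_const_mul, intervalIntegral.integral_const_mul]

/-- The weighted interpolation inequality (Lemma 7.2 of the paper):
with `ρ₀ x = min x (1-x)` on `I = (0,1)`,
`‖g‖²_{L²(I)} ≤ C ‖g‖_{L²_{ρ₀}} ‖g‖_{H¹_{ρ₀}}` for all `g ∈ C¹([0,1])`. -/
theorem weighted_interpolation :
    ∃ C : ℝ, 0 < C ∧
      ∀ g g' : ℝ → ℝ,
        (∀ x ∈ Icc (0:ℝ) 1, HasDerivWithinAt g (g' x) (Icc (0:ℝ) 1) x) →
        ContinuousOn g' (Icc (0:ℝ) 1) →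
        (∫ x in (0:ℝ)..1, (g x) ^ 2) ≤
          C * Real.sqrt (∫ x in (0:ℝ)..1, min x (1 - x) * (g x) ^ 2) *
            Real.sqrt (∫ x in (0:ℝ)..1, min x (1 - x) * ((g x) ^ 2 + (g' x) ^ 2)) := by
  refine ⟨8, by norm_num, fun g g' hg hg' => ?_⟩
  have hgc : ContinuousOn g (Icc 0 1) := fun x hx => (hg x hx).continuousWithinAt
  have hρ0 : ∀ x ∈ Icc (0:ℝ) 1, 0 ≤ min x (1 - x) := fun x hx => le_min hx.1 (sub_nonneg.2 hx.2)
  have hcs := intervalIntegral.integral_mul_mul_le_sqrt_mul_sqrt zero_le_one (by fun_prop)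
    hgc.abs hg'.abs hρ0
  simp only [sq_abs] at hcs
  have hsum : ∫ x in (0:ℝ)..1, min x (1 - x) * (g x ^ 2 + g' x ^ 2) =
      (∫ x in (0:ℝ)..1, min x (1 - x) * g x ^ 2) + ∫ x in (0:ℝ)..1, min x (1 - x) * g' x ^ 2 := by
    simp only [mul_add]
    exact intervalIntegral.integral_add
      ((show ContinuousOn _ (Icc (0:ℝ) 1) by fun_prop).intervalIntegrable_of_Icc zero_le_one)
      ((show ContinuousOn _ (Icc (0:ℝ) 1) by fun_prop).intervalIntegrable_of_Icc zero_le_one)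
  have key := integral_sq_le_weighted hg hg'
  rw [hsum]
  set A := ∫ x in (0:ℝ)..1, min x (1 - x) * g x ^ 2
  set B := ∫ x in (0:ℝ)..1, min x (1 - x) * g' x ^ 2
  have hA : 0 ≤ A :=
    intervalIntegral.integral_nonneg zero_le_one fun x hx => mul_nonneg (hρ0 x hx) (sq_nonneg _)
  have hB : 0 ≤ B :=
    intervalIntegral.integral_nonneg zero_le_one fun x hx => mul_nonneg (hρ0 x hx) (sq_nonneg _)
  have hAA : A ≤ √A * √(A + B) :=
    calc A = √A * √A := (Real.mul_self_sqrt hA).symm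
      _ ≤ √A * √(A + B) := by gcongr; linarith
  have hAB : √A * √B ≤ √A * √(A + B) := by gcongr; linarith
  linarith
end

section
/- Let d(x) = min(x, 1-x) for x ∈ (0,1). For every nonnegative integer k there is a constant C = C(k) such that for all w ∈ C¹([0,1]), ∫₀¹ d(x)^k w(x)² dx ≤ C ∫₀¹ d(x)^{k+2} (w(x)² + w'(x)²) dx. -/
/-!
With `ρ x = x * (1 - x)` one has `ρ ≤ d ≤ 2ρ` on `[0,1]`, so it suffices to prove the inequality
with `ρ` in place of `d`. The function `ρ^(k+1) (1 - 2x) w²` vanishes at both endpoints, so its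
derivative has integral zero. As `(1 - 2x)² = 1 - 4ρ`, that derivative is
`(k+1) ρ^k w² - (4k+6) ρ^(k+1) w² + 2 ρ^(k+1) (1 - 2x) w w'`, and by AM-GM the last two terms are
absorbed into a quarter of the first plus a multiple of `ρ^(k+2) (w² + w'²)`.
-/

open Set MeasureTheory

theorem integral_eq_sub_of_hasDerivWithinAt_Icc {a b : ℝ} (hab : a ≤ b) {f f' : ℝ → ℝ}
    (hf : ∀ x ∈ Icc a b, HasDerivWithinAt f (f' x) (Icc a b) x)
    (hf' : ContinuousOn f' (Icc a b)) :
    ∫ x in a..b, f' x = f b - f a :=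
  intervalIntegral.integral_eq_sub_of_hasDerivAt_of_le hab
    (fun x hx => (hf x hx).continuousWithinAt)
    (fun x hx => (hf x (Ioo_subset_Icc_self hx)).hasDerivAt (Icc_mem_nhds hx.1 hx.2))
    (hf'.intervalIntegrable_of_Icc hab)

/-- Here `r, s, a, b` stand for `x * (1 - x)`, `1 - 2 * x`, `w x`, `w' x`. -/
theorem pow_mul_sq_le_of_sq_eq_one_sub_four_mul (k : ℕ) {r s a b : ℝ} (hr : 0 ≤ r)
    (hs : s ^ 2 = 1 - 4 * r) :
    r ^ k * a ^ 2 ≤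
      4 / (k + 1) * ((((k : ℝ) + 1) * r ^ k * s ^ 2 - 2 * r ^ (k + 1)) * a ^ 2
        + 2 * r ^ (k + 1) * s * (a * b)) + 144 * (r ^ (k + 2) * (a ^ 2 + b ^ 2)) := by
  set n : ℝ := (k : ℝ) + 1 with hn_def
  have hn : 1 ≤ n := by simp [hn_def]
  have hr4 : r ≤ 1 / 4 := by nlinarith [sq_nonneg s]
  have hquad : 0 ≤ 144 * n * r ^ 2 - (16 * n + 4) * r + (3 * n - 1) := by
    nlinarith [sq_nonneg (12 * r - 1)]
  have key : n * a ^ 2 ≤ 4 * ((n * s ^ 2 - 2 * r) * a ^ 2 + 2 * r * s * (a * b))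
      + 144 * n * (r ^ 2 * (a ^ 2 + b ^ 2)) := by
    have hsa : s ^ 2 * a ^ 2 = (1 - 4 * r) * a ^ 2 := by rw [hs]
    have hnsa : n * s ^ 2 * a ^ 2 = n * (1 - 4 * r) * a ^ 2 := by rw [hs]
    nlinarith [sq_nonneg (s * a + 4 * r * b), mul_nonneg hquad (sq_nonneg a),
      mul_nonneg (sub_nonneg.2 hn) (sq_nonneg (r * b))]
  have hpos : 0 < n := by linarith
  have hfactor : 4 / n * ((n * r ^ k * s ^ 2 - 2 * r ^ (k + 1)) * a ^ 2
        + 2 * r ^ (k + 1) * s * (a * b)) + 144 * (r ^ (k + 2) * (a ^ 2 + b ^ 2))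
      = r ^ k * (4 * ((n * s ^ 2 - 2 * r) * a ^ 2 + 2 * r * s * (a * b))
        + 144 * n * (r ^ 2 * (a ^ 2 + b ^ 2))) / n := by
    field_simp
    ring
  rw [hfactor, le_div_iff₀ hpos]
  linarith [mul_le_mul_of_nonneg_left key (pow_nonneg hr k)]

section

variable {w w' : ℝ → ℝ}

/-- The integrand is the derivative of `(x * (1 - x)) ^ (k + 1) * (1 - 2 * x) * w x ^ 2`, which
vanishes at `0` and `1`. -/
theorem integral_deriv_hardy_multiplier_eq_zero (k : ℕ)
    (hw : ∀ x ∈ Icc (0:ℝ) 1, HasDerivWithinAt w (w' x) (Icc 0 1) x)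
    (hw' : ContinuousOn w' (Icc 0 1)) :
    ∫ x in (0:ℝ)..1, ((((k : ℝ) + 1) * (x * (1 - x)) ^ k * (1 - 2 * x) ^ 2
        - 2 * (x * (1 - x)) ^ (k + 1)) * w x ^ 2
        + 2 * (x * (1 - x)) ^ (k + 1) * (1 - 2 * x) * (w x * w' x)) = 0 := by
  have hcw : ContinuousOn w (Icc (0:ℝ) 1) := fun x hx => (hw x hx).continuousWithinAt
  have hderiv : ∀ x ∈ Icc (0:ℝ) 1, HasDerivWithinAt
      (fun x => (x * (1 - x)) ^ (k + 1) * (1 - 2 * x) * w x ^ 2)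
      ((((k : ℝ) + 1) * (x * (1 - x)) ^ k * (1 - 2 * x) ^ 2
        - 2 * (x * (1 - x)) ^ (k + 1)) * w x ^ 2
        + 2 * (x * (1 - x)) ^ (k + 1) * (1 - 2 * x) * (w x * w' x)) (Icc (0:ℝ) 1) x := by
    intro x hx
    have hρ : HasDerivAt (fun x : ℝ => x * (1 - x)) (1 - 2 * x) x :=
      ((hasDerivAt_id' x).mul ((hasDerivAt_id' x).const_sub 1)).congr_deriv (by ring)
    have hs : HasDerivAt (fun x : ℝ => 1 - 2 * x) (-2) x :=
      (((hasDerivAt_id' x).const_mul 2).const_sub 1).congr_deriv (by ring)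
    exact (((hρ.fun_pow (k + 1)).fun_mul hs).hasDerivWithinAt.fun_mul
      ((hw x hx).fun_pow 2)).congr_deriv (by push_cast; ring)
  rw [integral_eq_sub_of_hasDerivWithinAt_Icc zero_le_one hderiv (by fun_prop)]
  simp

theorem integral_mul_one_sub_pow_mul_sq_le (k : ℕ)
    (hw : ∀ x ∈ Icc (0:ℝ) 1, HasDerivWithinAt w (w' x) (Icc 0 1) x)
    (hw' : ContinuousOn w' (Icc 0 1)) :
    ∫ x in (0:ℝ)..1, (x * (1 - x)) ^ k * w x ^ 2 ≤
      144 * ∫ x in (0:ℝ)..1, (x * (1 - x)) ^ (k + 2) * (w x ^ 2 + w' x ^ 2) := by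
  have hcw : ContinuousOn w (Icc (0:ℝ) 1) := fun x hx => (hw x hx).continuousWithinAt
  have hint : ∀ f : ℝ → ℝ, ContinuousOn f (Icc 0 1) → IntervalIntegrable f volume 0 1 :=
    fun f hf => hf.intervalIntegrable_of_Icc zero_le_one
  calc ∫ x in (0:ℝ)..1, (x * (1 - x)) ^ k * w x ^ 2
      ≤ ∫ x in (0:ℝ)..1, (4 / (k + 1)
          * ((((k : ℝ) + 1) * (x * (1 - x)) ^ k * (1 - 2 * x) ^ 2
            - 2 * (x * (1 - x)) ^ (k + 1)) * w x ^ 2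
            + 2 * (x * (1 - x)) ^ (k + 1) * (1 - 2 * x) * (w x * w' x))
          + 144 * ((x * (1 - x)) ^ (k + 2) * (w x ^ 2 + w' x ^ 2))) :=
        intervalIntegral.integral_mono_on zero_le_one (hint _ (by fun_prop))
          (hint _ (by fun_prop))
          fun x hx => pow_mul_sq_le_of_sq_eq_one_sub_four_mul k
            (mul_nonneg hx.1 (sub_nonneg.2 hx.2)) (by ring)
    _ = 144 * ∫ x in (0:ℝ)..1, (x * (1 - x)) ^ (k + 2) * (w x ^ 2 + w' x ^ 2) := by
        rw [intervalIntegral.integral_add (hint _ (by fun_prop)) (hint _ (by fun_prop)),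
          intervalIntegral.integral_const_mul, intervalIntegral.integral_const_mul,
          integral_deriv_hardy_multiplier_eq_zero k hw hw', mul_zero, zero_add]

end

theorem mul_one_sub_le_min {x : ℝ} (h0 : 0 ≤ x) (h1 : x ≤ 1) :
    x * (1 - x) ≤ min x (1 - x) :=
  le_min (by nlinarith) (by nlinarith)

theorem min_le_two_mul_mul_one_sub {x : ℝ} (h0 : 0 ≤ x) (h1 : x ≤ 1) :
    min x (1 - x) ≤ 2 * (x * (1 - x)) := by
  rcases le_total x (1 / 2) with hx | hx
  · exact min_le_of_left_le (by nlinarith)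
  · exact min_le_of_right_le (by nlinarith)

/-- Weighted Sobolev (Hardy-type) inequality (3.2) of the paper: with
`d x = min x (1-x)` the distance to the boundary of `(0,1)`, for each `k ∈ ℕ`
there is `C = C(k)` with `∫₀¹ d^k w² ≤ C ∫₀¹ d^{k+2} (w² + w'²)`
for all `w ∈ C¹([0,1])`. -/
theorem weighted_sobolev_inequality (k : ℕ) :
    ∃ C : ℝ, 0 < C ∧
      ∀ w w' : ℝ → ℝ,
        (∀ x ∈ Icc (0:ℝ) 1, HasDerivWithinAt w (w' x) (Icc (0:ℝ) 1) x) →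
        ContinuousOn w' (Icc (0:ℝ) 1) →
        (∫ x in (0:ℝ)..1, (min x (1 - x)) ^ k * (w x) ^ 2) ≤
          C * ∫ x in (0:ℝ)..1, (min x (1 - x)) ^ (k + 2) * ((w x) ^ 2 + (w' x) ^ 2) := by
  refine ⟨2 ^ k * 144, by positivity, fun w w' hw hw' => ?_⟩
  have hcw : ContinuousOn w (Icc (0:ℝ) 1) := fun x hx => (hw x hx).continuousWithinAt
  have hint : ∀ f : ℝ → ℝ, ContinuousOn f (Icc 0 1) → IntervalIntegrable f volume 0 1 :=
    fun f hf => hf.intervalIntegrable_of_Icc zero_le_one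
  calc ∫ x in (0:ℝ)..1, min x (1 - x) ^ k * w x ^ 2
      ≤ ∫ x in (0:ℝ)..1, 2 ^ k * ((x * (1 - x)) ^ k * w x ^ 2) :=
        intervalIntegral.integral_mono_on zero_le_one (hint _ (by fun_prop))
          (hint _ (by fun_prop))
          fun x hx => by
            rw [← mul_assoc, ← mul_pow]
            gcongr
            · exact le_min hx.1 (sub_nonneg.2 hx.2)
            · exact min_le_two_mul_mul_one_sub hx.1 hx.2
    _ ≤ 2 ^ k * (144 * ∫ x in (0:ℝ)..1, (x * (1 - x)) ^ (k + 2) * (w x ^ 2 + w' x ^ 2)) := by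
        rw [intervalIntegral.integral_const_mul]
        gcongr
        exact integral_mul_one_sub_pow_mul_sq_le k hw hw'
    _ ≤ 2 ^ k * 144 * ∫ x in (0:ℝ)..1, min x (1 - x) ^ (k + 2) * (w x ^ 2 + w' x ^ 2) := by
        rw [mul_assoc]
        gcongr
        refine intervalIntegral.integral_mono_on zero_le_one (hint _ (by fun_prop))
          (hint _ (by fun_prop)) fun x hx => ?_
        gcongr
        · exact mul_nonneg hx.1 (sub_nonneg.2 hx.2)
        · exact mul_one_sub_le_min hx.1 hx.2
end

section
/- Let ρ₀(x) = min(x, 1-x) on I = (0,1). There is an absolute constant C such that for all w ∈ C¹([0,1]), ‖w‖²_{H^{1/2}(I)} ≤ C ∫₀¹ ρ₀(x)(w(x)² + w'(x)²) dx. -/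
/-!
Write the kernel as `slope w x y ^ 2` and cover `(0,1]²` by the blocks `(0,3/4]²`, `(1/4,1]²` and
the region `|x - y| ≥ 1/2`. On a block `(a,b]²` the kernel is symmetric, so its integral is at most
twice that over the triangle `y ≤ x`. Hardy's inequality `∫_a^b slope w a y ^ 2 ≤ 4 ∫_a^b w'²`,
applied from every point of the triangle, bounds the block by `8 ∫ (x - a) w'(x)²` or by
`8 ∫ (b - x) w'(x)²`; on `(0,3/4]`, resp. `(1/4,1]`, that weight is at most `3 min x (1 - x)`.
Far from the diagonal the kernel is at most `8 (w x² + w y²)`, and `∫ w²` is controlled by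
averaging `w x² ≤ 2 slope w x y ^ 2 + 2 w y²` over `y ∈ (1/4,3/4]`, where `min y (1 - y) ≥ 1/4`.
-/

open Set MeasureTheory

theorem slope_sq_eq (f : ℝ → ℝ) (x y : ℝ) : slope f x y ^ 2 = (f x - f y) ^ 2 / |x - y| ^ 2 := by
  rw [slope_def_field, div_pow, sq_abs, ← neg_sub x, ← neg_sub (f x), neg_sq, neg_sq]

theorem sq_le_two_mul_slope_sq_add (w : ℝ → ℝ) {x y : ℝ} (hxy : |x - y| ≤ 1) :
    w x ^ 2 ≤ 2 * slope w x y ^ 2 + 2 * w y ^ 2 := by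
  have hdiff : (w x - w y) ^ 2 ≤ slope w x y ^ 2 := by
    rcases eq_or_ne x y with rfl | hne
    · simp
    · rw [slope_sq_eq]
      exact le_div_self (sq_nonneg _) (by positivity) (pow_le_one₀ (abs_nonneg _) hxy)
  nlinarith [sq_nonneg (w x - 2 * w y)]

theorem slope_sq_le_of_le_abs_sub (w : ℝ → ℝ) {x y c : ℝ} (hc : 0 < c) (hxy : c ≤ |x - y|) :
    slope w x y ^ 2 ≤ 2 * (w x ^ 2 + w y ^ 2) / c ^ 2 := by
  rw [slope_sq_eq]
  calc (w x - w y) ^ 2 / |x - y| ^ 2 ≤ (w x - w y) ^ 2 / c ^ 2 := by gcongr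
    _ ≤ 2 * (w x ^ 2 + w y ^ 2) / c ^ 2 := by gcongr; nlinarith [sq_nonneg (w x + w y)]

theorem ContinuousOn.integrableOn_Ioc_prod {f : ℝ × ℝ → ℝ} {a b c d : ℝ}
    (hf : ContinuousOn f (Icc a b ×ˢ Icc c d)) : IntegrableOn f (Ioc a b ×ˢ Ioc c d) :=
  (hf.integrableOn_compact (isCompact_Icc.prod isCompact_Icc)).mono_set
    (prod_mono Ioc_subset_Icc_self Ioc_subset_Icc_self)

theorem setIntegral_prod_fst (f : ℝ → ℝ) (s t : Set ℝ) :
    ∫ p in s ×ˢ t, f p.1 = volume.real t * ∫ x in s, f x := by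
  rw [Measure.volume_eq_prod, ← Measure.prod_restrict, integral_fun_fst, smul_eq_mul,
    measureReal_restrict_apply_univ]

theorem setIntegral_prod_snd (f : ℝ → ℝ) (s t : Set ℝ) :
    ∫ p in s ×ˢ t, f p.2 = volume.real s * ∫ y in t, f y := by
  rw [Measure.volume_eq_prod, ← Measure.prod_restrict, integral_fun_snd, smul_eq_mul,
    measureReal_restrict_apply_univ]

section Hardy

variable {w w' : ℝ → ℝ} {a b : ℝ}

theorem continuousOn_update_slope (hab : a ≤ b)
    (hw : ∀ x ∈ Icc a b, HasDerivWithinAt w (w' x) (Icc a b) x) :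
    ContinuousOn (Function.update (slope w a) a (w' a)) (Icc a b) := by
  intro y hy
  rcases eq_or_ne y a with rfl | hya
  · exact continuousWithinAt_update_same.mpr
      (hasDerivWithinAt_iff_tendsto_slope.mp (hw y ⟨le_rfl, hab⟩))
  · rw [continuousWithinAt_update_of_ne hya]
    simp only [slope_fun_def_field]
    exact ((hw y hy).continuousWithinAt.sub continuousWithinAt_const).div
      (continuousWithinAt_id.sub continuousWithinAt_const) (sub_ne_zero.mpr hya)

theorem hasDerivAt_neg_slope_mul_sub {y : ℝ} (hy : a < y) (hw : HasDerivAt w (w' y) y) :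
    HasDerivAt (fun z => -(slope w a z * (w z - w a)))
      (slope w a y ^ 2 - 2 * slope w a y * w' y) y := by
  have h := (((hw.sub_const (w a)).pow 2).div ((hasDerivAt_id y).sub_const a)
    (sub_ne_zero.mpr hy.ne')).neg
  have heq : (fun z => -(slope w a z * (w z - w a))) =
      fun z => -((w z - w a) ^ 2 / (id z - a)) := by
    ext z; simp only [slope_def_field, id]; ring
  rw [heq]
  refine h.congr_deriv ?_
  simp only [slope_def_field, id, Pi.pow_apply]
  field_simp
  ring

/-- Hardy's inequality. With `q` the difference quotient at `a`, extended continuously by `w' a`,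
`q ^ 2 - 2 q w'` is the derivative of `-(w y - w a) ^ 2 / (y - a)`, which vanishes at `a` and is
`≤ 0` at `b`; hence `∫ q ^ 2 ≤ 2 ∫ q w' ≤ ∫ q ^ 2 / 2 + 2 ∫ w' ^ 2`. -/
theorem integral_slope_left_sq_le (hab : a ≤ b)
    (hw : ∀ x ∈ Icc a b, HasDerivWithinAt w (w' x) (Icc a b) x)
    (hw' : ContinuousOn w' (Icc a b)) :
    ∫ y in a..b, slope w a y ^ 2 ≤ 4 * ∫ y in a..b, w' y ^ 2 := by
  set q := Function.update (slope w a) a (w' a)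
  have hq : ContinuousOn q (Icc a b) := continuousOn_update_slope hab hw
  have hwc : ContinuousOn w (Icc a b) := fun x hx => (hw x hx).continuousWithinAt
  have hii : ∀ {f : ℝ → ℝ}, ContinuousOn f (Icc a b) → IntervalIntegrable f volume a b :=
    fun hf => hf.intervalIntegrable_of_Icc hab
  have hG : ContinuousOn (fun y => -(q y * (w y - w a))) (Icc a b) := by fun_prop
  have hftc : ∫ y in a..b, (q y ^ 2 - 2 * q y * w' y) = -(q b * (w b - w a)) := by
    rw [intervalIntegral.integral_eq_sub_of_hasDerivAt_of_le hab hG (fun y hy => ?_)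
      (hii (by fun_prop))]
    · simp
    · have hqy : q =ᶠ[nhds y] slope w a :=
        (eventually_ne_nhds hy.1.ne').mono fun z hz => Function.update_of_ne hz _ _
      rw [hqy.eq_of_nhds]
      exact (hasDerivAt_neg_slope_mul_sub hy.1 ((hw y (Ioo_subset_Icc_self hy)).hasDerivAt
        (Icc_mem_nhds hy.1 hy.2))).congr_of_eventuallyEq (hqy.mono fun z hz => by simp [hz])
  have hb : 0 ≤ q b * (w b - w a) := by
    rcases hab.eq_or_lt with rfl | hab'
    · simp
    · rw [show q b = (w b - w a) / (b - a) by simp [q, hab'.ne', slope_def_field],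
        div_mul_eq_mul_div, ← sq]
      exact div_nonneg (sq_nonneg _) (sub_pos.mpr hab').le
  have hmono : ∫ y in a..b, q y ^ 2 ≤
      ∫ y in a..b, ((q y ^ 2 - 2 * q y * w' y) + (q y ^ 2 / 2 + 2 * w' y ^ 2)) :=
    intervalIntegral.integral_mono_on hab (hii (by fun_prop)) (hii (by fun_prop))
      fun y _ => by nlinarith [sq_nonneg (q y - 2 * w' y)]
  rw [intervalIntegral.integral_add (hii (by fun_prop)) (hii (by fun_prop)), hftc,
    intervalIntegral.integral_add (hii (by fun_prop)) (hii (by fun_prop)),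
    intervalIntegral.integral_div, intervalIntegral.integral_const_mul] at hmono
  have hslope : ∫ y in a..b, slope w a y ^ 2 = ∫ y in a..b, q y ^ 2 := by
    rw [intervalIntegral.integral_of_le hab, intervalIntegral.integral_of_le hab]
    exact setIntegral_congr_fun measurableSet_Ioc fun y hy => by simp [q, hy.1.ne']
  linarith

theorem integral_slope_right_sq_le (hab : a ≤ b)
    (hw : ∀ x ∈ Icc a b, HasDerivWithinAt w (w' x) (Icc a b) x)
    (hw' : ContinuousOn w' (Icc a b)) :
    ∫ y in a..b, slope w y b ^ 2 ≤ 4 * ∫ y in a..b, w' y ^ 2 := by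
  have hneg : MapsTo (fun t : ℝ => -t) (Icc (-b) (-a)) (Icc a b) := fun t ht =>
    ⟨le_neg_of_le_neg ht.2, neg_le_of_neg_le ht.1⟩
  have h := integral_slope_left_sq_le (w := fun t => w (-t)) (w' := fun t => -w' (-t))
    (neg_le_neg hab)
    (fun t ht => by
      simpa [Function.comp_def] using
        (hw (-t) (hneg ht)).comp t (hasDerivAt_neg t).hasDerivWithinAt hneg)
    (hw'.comp continuousOn_neg hneg).neg
  rw [← intervalIntegral.integral_comp_neg (fun y => slope (fun t => w (-t)) (-b) y ^ 2),
    ← intervalIntegral.integral_comp_neg (fun y => (-w' (-y)) ^ 2)] at h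
  convert h using 3 with y
  · simp only [slope_def_field, neg_neg]; ring
  · simp

end Hardy

theorem abs_slope_le_of_hasDerivWithinAt {w w' : ℝ → ℝ} {s : Set ℝ} (hs : Convex ℝ s) {C x y : ℝ}
    (hw : ∀ x ∈ s, HasDerivWithinAt w (w' x) s x) (hC : ∀ x ∈ s, |w' x| ≤ C)
    (hx : x ∈ s) (hy : y ∈ s) : |slope w x y| ≤ C := by
  rcases eq_or_ne x y with rfl | hxy
  · simpa using (abs_nonneg _).trans (hC x hx)
  · have h := hs.norm_image_sub_le_of_norm_hasDerivWithin_le hw hC hx hy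
    rw [slope_def_field, abs_div, div_le_iff₀ (abs_pos.mpr (sub_ne_zero.mpr hxy.symm))]
    simpa using h

def belowDiagonal : Set (ℝ × ℝ) := {p | p.2 ≤ p.1}

theorem measurableSet_belowDiagonal : MeasurableSet belowDiagonal :=
  measurableSet_le measurable_snd measurable_fst

section Triangle

variable {F : ℝ × ℝ → ℝ} {a b : ℝ}

theorem setIntegral_indicator_belowDiagonal_left {x : ℝ} (hx : x ≤ b) :
    ∫ y in Ioc a b, belowDiagonal.indicator F (x, y) = ∫ y in Ioc a x, F (x, y) := by
  have h : (fun y => belowDiagonal.indicator F (x, y)) = (Iic x).indicator fun y => F (x, y) := by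
    ext y; simp [belowDiagonal, indicator_apply]
  have hs : Ioc a b ∩ Iic x = Ioc a x := by
    ext y; simp only [mem_inter_iff, mem_Ioc, mem_Iic]; constructor <;> intro h <;> grind
  rw [h, setIntegral_indicator measurableSet_Iic, hs]

theorem setIntegral_indicator_belowDiagonal_right {y : ℝ} (hy : a < y) :
    ∫ x in Ioc a b, belowDiagonal.indicator F (x, y) = ∫ x in Icc y b, F (x, y) := by
  have h : (fun x => belowDiagonal.indicator F (x, y)) = (Ici y).indicator fun x => F (x, y) := by
    ext x; simp [belowDiagonal, indicator_apply]
  have hs : Ioc a b ∩ Ici y = Icc y b := by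
    ext x; simp only [mem_inter_iff, mem_Ioc, mem_Ici, mem_Icc]; constructor <;> intro h <;> grind
  rw [h, setIntegral_indicator measurableSet_Ici, hs]

variable (hF : IntegrableOn F (Ioc a b ×ˢ Ioc a b))
include hF

theorem integrable_indicator_belowDiagonal :
    Integrable (belowDiagonal.indicator F)
      ((volume.restrict (Ioc a b)).prod (volume.restrict (Ioc a b))) := by
  rw [Measure.prod_restrict, ← Measure.volume_eq_prod]
  exact hF.indicator measurableSet_belowDiagonal

theorem integrableOn_setIntegral_Ioc_left :
    IntegrableOn (fun x => ∫ y in Ioc a x, F (x, y)) (Ioc a b) :=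
  (integrable_indicator_belowDiagonal hF).integral_prod_left.congr
    ((ae_restrict_mem measurableSet_Ioc).mono fun _ hx =>
      setIntegral_indicator_belowDiagonal_left hx.2)

theorem integrableOn_setIntegral_Icc_right :
    IntegrableOn (fun y => ∫ x in Icc y b, F (x, y)) (Ioc a b) :=
  (integrable_indicator_belowDiagonal hF).integral_prod_right.congr
    ((ae_restrict_mem measurableSet_Ioc).mono fun _ hy =>
      setIntegral_indicator_belowDiagonal_right hy.1)

theorem setIntegral_indicator_belowDiagonal_eq_left :
    ∫ p in Ioc a b ×ˢ Ioc a b, belowDiagonal.indicator F p =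
      ∫ x in Ioc a b, ∫ y in Ioc a x, F (x, y) := by
  rw [Measure.volume_eq_prod, ← Measure.prod_restrict,
    integral_prod _ (integrable_indicator_belowDiagonal hF)]
  exact setIntegral_congr_fun measurableSet_Ioc fun x hx =>
    setIntegral_indicator_belowDiagonal_left hx.2

theorem setIntegral_indicator_belowDiagonal_eq_right :
    ∫ p in Ioc a b ×ˢ Ioc a b, belowDiagonal.indicator F p =
      ∫ y in Ioc a b, ∫ x in Icc y b, F (x, y) := by
  rw [Measure.volume_eq_prod, ← Measure.prod_restrict,
    integral_prod_symm _ (integrable_indicator_belowDiagonal hF)]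
  exact setIntegral_congr_fun measurableSet_Ioc fun y hy =>
    setIntegral_indicator_belowDiagonal_right hy.1

end Triangle

theorem setIntegral_le_two_mul_setIntegral_indicator_belowDiagonal {F : ℝ × ℝ → ℝ} {s : Set ℝ}
    (hF : IntegrableOn F (s ×ˢ s)) (hsymm : ∀ p, F p.swap = F p) (hnonneg : ∀ p, 0 ≤ F p) :
    ∫ p in s ×ˢ s, F p ≤ 2 * ∫ p in s ×ˢ s, belowDiagonal.indicator F p := by
  set G := belowDiagonal.indicator F
  have hG : IntegrableOn G (s ×ˢ s) := hF.indicator measurableSet_belowDiagonal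
  have hGswap : IntegrableOn (fun p => G p.swap) (s ×ˢ s) := by
    rw [IntegrableOn, Measure.volume_eq_prod, ← Measure.prod_restrict] at hG ⊢
    exact hG.swap
  have hswap : ∫ p in s ×ˢ s, G p.swap = ∫ p in s ×ˢ s, G p := by
    rw [Measure.volume_eq_prod]; exact setIntegral_prod_swap s s G
  calc ∫ p in s ×ˢ s, F p ≤ ∫ p in s ×ˢ s, (G p + G p.swap) := by
        refine setIntegral_mono hF (hG.add hGswap) fun p => ?_
        have hG0 : ∀ q, 0 ≤ G q := fun q => indicator_nonneg (fun q _ => hnonneg q) q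
        by_cases hp : p ∈ belowDiagonal
        · simpa [G, indicator_of_mem hp] using hG0 p.swap
        · have hp' : p.swap ∈ belowDiagonal := show p.1 ≤ p.2 from (not_le.mp hp).le
          simpa [G, indicator_of_mem hp', hsymm] using hG0 p
    _ = 2 * ∫ p in s ×ˢ s, G p := by rw [integral_add hG hGswap, hswap]; ring

section Square

variable {w w' : ℝ → ℝ} {a b : ℝ} (hwc : Continuous w)
  (hw : ∀ x ∈ Icc a b, HasDerivWithinAt w (w' x) (Icc a b) x) (hw' : ContinuousOn w' (Icc a b))
include hwc hw hw'

theorem integrableOn_Ioc_prod_slope_sq :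
    IntegrableOn (fun p : ℝ × ℝ => slope w p.1 p.2 ^ 2) (Ioc a b ×ˢ Ioc a b) := by
  obtain ⟨C, hC⟩ := isCompact_Icc.exists_bound_of_continuousOn hw'
  have hmeas : Measurable fun p : ℝ × ℝ => slope w p.1 p.2 ^ 2 := by
    simp only [slope_def_field]
    fun_prop
  refine (Measure.integrableOn_of_bounded (M := C ^ 2)
    (isCompact_Icc.prod isCompact_Icc).measure_lt_top.ne hmeas.aestronglyMeasurable ?_).mono_set
    (prod_mono Ioc_subset_Icc_self Ioc_subset_Icc_self)
  refine ae_restrict_of_forall_mem (measurableSet_Icc.prod measurableSet_Icc) fun p hp => ?_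
  rw [Real.norm_eq_abs, abs_pow]
  exact pow_le_pow_left₀ (abs_nonneg _) (abs_slope_le_of_hasDerivWithinAt (convex_Icc a b) hw
    (fun x hx => by simpa using hC x hx) hp.1 hp.2) 2

theorem setIntegral_indicator_slope_sq_le_left :
    ∫ p in Ioc a b ×ˢ Ioc a b, belowDiagonal.indicator (fun p => slope w p.1 p.2 ^ 2) p ≤
      4 * ∫ x in Ioc a b, (x - a) * w' x ^ 2 := by
  have hk := integrableOn_Ioc_prod_slope_sq hwc hw hw'
  have hg : IntegrableOn (fun p : ℝ × ℝ => w' p.1 ^ 2) (Ioc a b ×ˢ Ioc a b) :=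
    ((hw'.comp continuousOn_fst fun p hp => hp.1).pow 2).integrableOn_Ioc_prod
  have hhardy : ∀ y ∈ Ioc a b,
      ∫ x in Icc y b, slope w x y ^ 2 ≤ 4 * ∫ x in Icc y b, w' x ^ 2 := by
    intro y hy
    have hsub : Icc y b ⊆ Icc a b := Icc_subset_Icc hy.1.le le_rfl
    have h := integral_slope_left_sq_le hy.2 (fun x hx => (hw x (hsub hx)).mono hsub)
      (hw'.mono hsub)
    simp only [intervalIntegral.integral_of_le hy.2, slope_comm w y] at h
    simpa only [integral_Icc_eq_integral_Ioc] using h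
  rw [setIntegral_indicator_belowDiagonal_eq_right hk]
  calc ∫ y in Ioc a b, ∫ x in Icc y b, slope w x y ^ 2
      ≤ ∫ y in Ioc a b, 4 * ∫ x in Icc y b, w' x ^ 2 :=
        setIntegral_mono_on (integrableOn_setIntegral_Icc_right hk)
          ((integrableOn_setIntegral_Icc_right hg).const_mul 4) measurableSet_Ioc hhardy
    _ = 4 * ∫ x in Ioc a b, (x - a) * w' x ^ 2 := by
        rw [integral_const_mul, ← setIntegral_indicator_belowDiagonal_eq_right hg,
          setIntegral_indicator_belowDiagonal_eq_left hg]
        congr 1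
        refine setIntegral_congr_fun measurableSet_Ioc fun x hx => ?_
        simp only [setIntegral_const, Real.volume_real_Ioc_of_le hx.1.le, smul_eq_mul]

theorem setIntegral_indicator_slope_sq_le_right :
    ∫ p in Ioc a b ×ˢ Ioc a b, belowDiagonal.indicator (fun p => slope w p.1 p.2 ^ 2) p ≤
      4 * ∫ y in Ioc a b, (b - y) * w' y ^ 2 := by
  have hk := integrableOn_Ioc_prod_slope_sq hwc hw hw'
  have hg : IntegrableOn (fun p : ℝ × ℝ => w' p.2 ^ 2) (Ioc a b ×ˢ Ioc a b) :=
    ((hw'.comp continuousOn_snd fun p hp => hp.2).pow 2).integrableOn_Ioc_prod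
  have hhardy : ∀ x ∈ Ioc a b,
      ∫ y in Ioc a x, slope w x y ^ 2 ≤ 4 * ∫ y in Ioc a x, w' y ^ 2 := by
    intro x hx
    have hsub : Icc a x ⊆ Icc a b := Icc_subset_Icc le_rfl hx.2
    have h := integral_slope_right_sq_le hx.1.le (fun y hy => (hw y (hsub hy)).mono hsub)
      (hw'.mono hsub)
    simpa only [intervalIntegral.integral_of_le hx.1.le, slope_comm w _ x] using h
  rw [setIntegral_indicator_belowDiagonal_eq_left hk]
  calc ∫ x in Ioc a b, ∫ y in Ioc a x, slope w x y ^ 2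
      ≤ ∫ x in Ioc a b, 4 * ∫ y in Ioc a x, w' y ^ 2 :=
        setIntegral_mono_on (integrableOn_setIntegral_Ioc_left hk)
          ((integrableOn_setIntegral_Ioc_left hg).const_mul 4) measurableSet_Ioc hhardy
    _ = 4 * ∫ y in Ioc a b, (b - y) * w' y ^ 2 := by
        rw [integral_const_mul, ← setIntegral_indicator_belowDiagonal_eq_left hg,
          setIntegral_indicator_belowDiagonal_eq_right hg]
        congr 1
        refine setIntegral_congr_fun measurableSet_Ioc fun y hy => ?_
        simp only [setIntegral_const, Real.volume_real_Icc_of_le hy.2, smul_eq_mul]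

theorem setIntegral_slope_sq_le_left :
    ∫ p in Ioc a b ×ˢ Ioc a b, slope w p.1 p.2 ^ 2 ≤ 8 * ∫ x in Ioc a b, (x - a) * w' x ^ 2 := by
  have := setIntegral_le_two_mul_setIntegral_indicator_belowDiagonal
    (integrableOn_Ioc_prod_slope_sq hwc hw hw')
    (fun p => by rw [Prod.fst_swap, Prod.snd_swap, slope_comm]) (fun p => sq_nonneg _)
  linarith [setIntegral_indicator_slope_sq_le_left hwc hw hw']

theorem setIntegral_slope_sq_le_right :
    ∫ p in Ioc a b ×ˢ Ioc a b, slope w p.1 p.2 ^ 2 ≤ 8 * ∫ y in Ioc a b, (b - y) * w' y ^ 2 := by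
  have := setIntegral_le_two_mul_setIntegral_indicator_belowDiagonal
    (integrableOn_Ioc_prod_slope_sq hwc hw hw')
    (fun p => by rw [Prod.fst_swap, Prod.snd_swap, slope_comm]) (fun p => sq_nonneg _)
  linarith [setIntegral_indicator_slope_sq_le_right hwc hw hw']

end Square

section UnitInterval

noncomputable def weightedEnergy (w w' : ℝ → ℝ) : ℝ :=
  ∫ x in Ioc 0 1, min x (1 - x) * (w x ^ 2 + w' x ^ 2)

noncomputable def blockSlopeSq (w : ℝ → ℝ) (p : ℝ × ℝ) : ℝ :=
  (Ioc 0 (3 / 4) ×ˢ Ioc 0 (3 / 4)).indicator (fun p => slope w p.1 p.2 ^ 2) p +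
    (Ioc (1 / 4) 1 ×ˢ Ioc (1 / 4) 1).indicator (fun p => slope w p.1 p.2 ^ 2) p

variable {w w' : ℝ → ℝ}

theorem blockSlopeSq_nonneg (w : ℝ → ℝ) (p : ℝ × ℝ) : 0 ≤ blockSlopeSq w p :=
  add_nonneg (indicator_nonneg (fun _ _ => sq_nonneg _) p)
    (indicator_nonneg (fun _ _ => sq_nonneg _) p)

theorem slope_sq_le_blockSlopeSq (w : ℝ → ℝ) {p : ℝ × ℝ}
    (hp : p ∈ Ioc 0 (3 / 4) ×ˢ Ioc 0 (3 / 4) ∨ p ∈ Ioc (1 / 4) 1 ×ˢ Ioc (1 / 4) 1) :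
    slope w p.1 p.2 ^ 2 ≤ blockSlopeSq w p := by
  have h0 : ∀ s : Set (ℝ × ℝ), 0 ≤ s.indicator (fun p => slope w p.1 p.2 ^ 2) p :=
    fun s => indicator_nonneg (fun _ _ => sq_nonneg _) p
  rcases hp with hp | hp
  · have := h0 (Ioc (1 / 4) 1 ×ˢ Ioc (1 / 4) 1)
    rw [blockSlopeSq, indicator_of_mem hp]; linarith
  · have := h0 (Ioc 0 (3 / 4) ×ˢ Ioc 0 (3 / 4))
    rw [blockSlopeSq, indicator_of_mem hp]; linarith

theorem sq_le_two_mul_blockSlopeSq_add (w : ℝ → ℝ) {x y : ℝ} (hx : x ∈ Ioc 0 1)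
    (hy : y ∈ Ioc (1 / 4) (3 / 4)) : w x ^ 2 ≤ 2 * blockSlopeSq w (x, y) + 2 * w y ^ 2 := by
  have hxy : |x - y| ≤ 1 := abs_le.mpr ⟨by linarith [hx.1, hy.2], by linarith [hx.2, hy.1]⟩
  have hblock : slope w x y ^ 2 ≤ blockSlopeSq w (x, y) := by
    refine slope_sq_le_blockSlopeSq w (p := (x, y)) ?_
    rcases le_or_gt x (3 / 4) with h | h
    · exact Or.inl ⟨⟨hx.1, h⟩, ⟨by linarith [hy.1], hy.2⟩⟩
    · exact Or.inr ⟨⟨by linarith, hx.2⟩, ⟨hy.1, by linarith [hy.2]⟩⟩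
  linarith [sq_le_two_mul_slope_sq_add w hxy]

theorem slope_sq_le_blockSlopeSq_add (w : ℝ → ℝ) {x y : ℝ} (hx : x ∈ Ioc 0 1)
    (hy : y ∈ Ioc 0 1) : slope w x y ^ 2 ≤ blockSlopeSq w (x, y) + 8 * (w x ^ 2 + w y ^ 2) := by
  have h0 : 0 ≤ 8 * (w x ^ 2 + w y ^ 2) := by positivity
  by_cases hL : x ≤ 3 / 4 ∧ y ≤ 3 / 4
  · linarith [slope_sq_le_blockSlopeSq w (p := (x, y)) (Or.inl ⟨⟨hx.1, hL.1⟩, ⟨hy.1, hL.2⟩⟩)]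
  by_cases hR : 1 / 4 < x ∧ 1 / 4 < y
  · linarith [slope_sq_le_blockSlopeSq w (p := (x, y)) (Or.inr ⟨⟨hR.1, hx.2⟩, ⟨hR.2, hy.2⟩⟩)]
  have hfar : 1 / 2 ≤ |x - y| := by
    rw [not_and_or, not_le, not_le] at hL
    rw [not_and_or, not_lt, not_lt] at hR
    rw [le_abs]
    rcases hL with h | h <;> rcases hR with h' | h' <;>
      first | (left; linarith) | (right; linarith)
  have hslope := slope_sq_le_of_le_abs_sub w (by norm_num) hfar
  have := blockSlopeSq_nonneg w (x, y)
  norm_num at hslope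
  linarith

theorem setIntegral_le_mul_weightedEnergy (hwc : Continuous w) (hw' : ContinuousOn w' (Icc 0 1))
    {f : ℝ → ℝ} {c d K : ℝ} (hc : 0 ≤ c) (hd : d ≤ 1) (hK : 0 ≤ K)
    (hf : ContinuousOn f (Icc c d))
    (hfK : ∀ x ∈ Ioc c d, f x ≤ K * (min x (1 - x) * (w x ^ 2 + w' x ^ 2))) :
    ∫ x in Ioc c d, f x ≤ K * weightedEnergy w w' := by
  have hsub : Ioc c d ⊆ Ioc 0 1 := Ioc_subset_Ioc hc hd
  have hR : IntegrableOn (fun x => K * (min x (1 - x) * (w x ^ 2 + w' x ^ 2))) (Ioc 0 1) :=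
    (ContinuousOn.integrableOn_Icc (by fun_prop)).mono_set Ioc_subset_Icc_self
  rw [weightedEnergy, ← integral_const_mul]
  refine (setIntegral_mono_on (hf.integrableOn_Icc.mono_set Ioc_subset_Icc_self)
    (hR.mono_set hsub) measurableSet_Ioc hfK).trans
    (setIntegral_mono_set hR (ae_restrict_of_forall_mem measurableSet_Ioc fun x hx => ?_)
      hsub.eventuallyLE)
  exact mul_nonneg hK (mul_nonneg (le_min hx.1.le (sub_nonneg.mpr hx.2)) (by positivity))

variable (hwc : Continuous w)
  (hw : ∀ x ∈ Icc 0 1, HasDerivWithinAt w (w' x) (Icc 0 1) x) (hw' : ContinuousOn w' (Icc 0 1))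
include hwc hw hw'

theorem integrableOn_blockSlopeSq : IntegrableOn (blockSlopeSq w) (Ioc 0 1 ×ˢ Ioc 0 1) :=
  ((integrableOn_Ioc_prod_slope_sq hwc hw hw').indicator
    (measurableSet_Ioc.prod measurableSet_Ioc)).add
    ((integrableOn_Ioc_prod_slope_sq hwc hw hw').indicator
      (measurableSet_Ioc.prod measurableSet_Ioc))

theorem setIntegral_blockSlopeSq_le :
    ∫ p in Ioc 0 1 ×ˢ Ioc 0 1, blockSlopeSq w p ≤ 48 * weightedEnergy w w' := by
  have hk := integrableOn_Ioc_prod_slope_sq hwc hw hw'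
  have hblock : ∀ {c d : ℝ}, 0 ≤ c → d ≤ 1 →
      ∫ p in Ioc 0 1 ×ˢ Ioc 0 1, (Ioc c d ×ˢ Ioc c d).indicator (fun p => slope w p.1 p.2 ^ 2) p =
        ∫ p in Ioc c d ×ˢ Ioc c d, slope w p.1 p.2 ^ 2 := fun hc hd => by
    rw [setIntegral_indicator (measurableSet_Ioc.prod measurableSet_Ioc),
      inter_eq_right.mpr (prod_mono (Ioc_subset_Ioc hc hd) (Ioc_subset_Ioc hc hd))]
  have hder : ∀ {c d : ℝ}, 0 ≤ c → d ≤ 1 →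
      ∀ x ∈ Icc c d, HasDerivWithinAt w (w' x) (Icc c d) x :=
    fun hc hd x hx => (hw x (Icc_subset_Icc hc hd hx)).mono (Icc_subset_Icc hc hd)
  have hcont : ∀ {c d : ℝ}, 0 ≤ c → d ≤ 1 → ContinuousOn w' (Icc c d) :=
    fun hc hd => hw'.mono (Icc_subset_Icc hc hd)
  have hL := setIntegral_slope_sq_le_left hwc (hder le_rfl (by norm_num : (3 / 4 : ℝ) ≤ 1))
    (hcont le_rfl (by norm_num : (3 / 4 : ℝ) ≤ 1))
  have hR := setIntegral_slope_sq_le_right hwc (hder (by norm_num : (0 : ℝ) ≤ 1 / 4) le_rfl)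
    (hcont (by norm_num : (0 : ℝ) ≤ 1 / 4) le_rfl)
  have hLw := setIntegral_le_mul_weightedEnergy hwc hw' le_rfl (by norm_num : (3 / 4 : ℝ) ≤ 1)
    (by norm_num : (0 : ℝ) ≤ 3) (f := fun x => (x - 0) * w' x ^ 2)
    (by have := hcont (c := 0) (d := 3 / 4) le_rfl (by norm_num); fun_prop) fun x hx => by
      have hρ : x - 0 ≤ 3 * min x (1 - x) := by
        rcases min_cases x (1 - x) with ⟨h, _⟩ | ⟨h, _⟩ <;> rw [h] <;> linarith [hx.1, hx.2]
      nlinarith [mul_le_mul_of_nonneg_right hρ (sq_nonneg (w' x)), sq_nonneg (w x), hx.1]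
  have hRw := setIntegral_le_mul_weightedEnergy hwc hw' (by norm_num : (0 : ℝ) ≤ 1 / 4) le_rfl
    (by norm_num : (0 : ℝ) ≤ 3) (f := fun x => (1 - x) * w' x ^ 2)
    (by have := hcont (c := 1 / 4) (d := 1) (by norm_num) le_rfl; fun_prop) fun x hx => by
      have hρ : 1 - x ≤ 3 * min x (1 - x) := by
        rcases min_cases x (1 - x) with ⟨h, _⟩ | ⟨h, _⟩ <;> rw [h] <;> linarith [hx.1, hx.2]
      nlinarith [mul_le_mul_of_nonneg_right hρ (sq_nonneg (w' x)), sq_nonneg (w x), hx.2]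
  unfold blockSlopeSq
  rw [integral_add (hk.indicator (measurableSet_Ioc.prod measurableSet_Ioc))
    (hk.indicator (measurableSet_Ioc.prod measurableSet_Ioc)), hblock le_rfl (by norm_num),
    hblock (by norm_num) le_rfl]
  linarith

theorem integral_sq_le_blockSlopeSq :
    ∫ x in Ioc 0 1, w x ^ 2 ≤
      4 * (∫ p in Ioc 0 1 ×ˢ Ioc 0 1, blockSlopeSq w p) +
        4 * ∫ y in Ioc (1 / 4) (3 / 4), w y ^ 2 := by
  have hsub : Ioc (0 : ℝ) 1 ×ˢ Ioc (1 / 4 : ℝ) (3 / 4) ⊆ Ioc 0 1 ×ˢ Ioc 0 1 :=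
    prod_mono subset_rfl (Ioc_subset_Ioc (by norm_num) (by norm_num))
  have hΦ := integrableOn_blockSlopeSq hwc hw hw'
  have hw2 : IntegrableOn (fun p : ℝ × ℝ => 2 * w p.2 ^ 2) (Ioc 0 1 ×ˢ Ioc (1 / 4) (3 / 4)) :=
    ContinuousOn.integrableOn_Ioc_prod (by fun_prop)
  have hmono : ∫ p in Ioc (0 : ℝ) 1 ×ˢ Ioc (1 / 4 : ℝ) (3 / 4), blockSlopeSq w p ≤
      ∫ p in Ioc 0 1 ×ˢ Ioc 0 1, blockSlopeSq w p :=
    setIntegral_mono_set hΦ (ae_of_all _ (blockSlopeSq_nonneg w)) hsub.eventuallyLE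
  calc ∫ x in Ioc 0 1, w x ^ 2
      = 2 * ∫ p in Ioc (0 : ℝ) 1 ×ˢ Ioc (1 / 4 : ℝ) (3 / 4), w p.1 ^ 2 := by
        rw [setIntegral_prod_fst (fun x => w x ^ 2), Real.volume_real_Ioc_of_le (by norm_num)]
        ring
    _ ≤ 2 * ∫ p in Ioc (0 : ℝ) 1 ×ˢ Ioc (1 / 4 : ℝ) (3 / 4),
          (2 * blockSlopeSq w p + 2 * w p.2 ^ 2) := by
        refine mul_le_mul_of_nonneg_left ?_ zero_le_two
        exact setIntegral_mono_on (ContinuousOn.integrableOn_Ioc_prod (by fun_prop))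
          (((hΦ.mono_set hsub).const_mul 2).add hw2) (measurableSet_Ioc.prod measurableSet_Ioc)
          fun p hp => sq_le_two_mul_blockSlopeSq_add w hp.1 hp.2
    _ = 4 * (∫ p in Ioc (0 : ℝ) 1 ×ˢ Ioc (1 / 4 : ℝ) (3 / 4), blockSlopeSq w p) +
          4 * ∫ y in Ioc (1 / 4) (3 / 4), w y ^ 2 := by
        rw [integral_add ((hΦ.mono_set hsub).const_mul 2) hw2, integral_const_mul,
          integral_const_mul, setIntegral_prod_snd (fun y => w y ^ 2),
          Real.volume_real_Ioc_of_le zero_le_one]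
        ring
    _ ≤ _ := by linarith

theorem setIntegral_slope_sq_le_blockSlopeSq :
    ∫ p in Ioc 0 1 ×ˢ Ioc 0 1, slope w p.1 p.2 ^ 2 ≤
      (∫ p in Ioc 0 1 ×ˢ Ioc 0 1, blockSlopeSq w p) + 16 * ∫ x in Ioc 0 1, w x ^ 2 := by
  have hΦ := integrableOn_blockSlopeSq hwc hw hw'
  have hw1 : IntegrableOn (fun p : ℝ × ℝ => w p.1 ^ 2) (Ioc 0 1 ×ˢ Ioc 0 1) :=
    ContinuousOn.integrableOn_Ioc_prod (by fun_prop)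
  have hw2 : IntegrableOn (fun p : ℝ × ℝ => w p.2 ^ 2) (Ioc 0 1 ×ˢ Ioc 0 1) :=
    ContinuousOn.integrableOn_Ioc_prod (by fun_prop)
  calc ∫ p in Ioc 0 1 ×ˢ Ioc 0 1, slope w p.1 p.2 ^ 2
      ≤ ∫ p in Ioc 0 1 ×ˢ Ioc 0 1, (blockSlopeSq w p + 8 * (w p.1 ^ 2 + w p.2 ^ 2)) :=
        setIntegral_mono_on (integrableOn_Ioc_prod_slope_sq hwc hw hw')
          (hΦ.add ((hw1.add hw2).const_mul 8)) (measurableSet_Ioc.prod measurableSet_Ioc)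
          fun p hp => slope_sq_le_blockSlopeSq_add w hp.1 hp.2
    _ = (∫ p in Ioc 0 1 ×ˢ Ioc 0 1, blockSlopeSq w p) + 16 * ∫ x in Ioc 0 1, w x ^ 2 := by
        rw [integral_add (g := fun p => 8 * (w p.1 ^ 2 + w p.2 ^ 2)) hΦ
            ((hw1.add hw2).const_mul 8), integral_const_mul, integral_add hw1 hw2,
          setIntegral_prod_fst (fun x => w x ^ 2), setIntegral_prod_snd (fun y => w y ^ 2),
          Real.volume_real_Ioc_of_le zero_le_one]
        ring

theorem integral_sq_add_setIntegral_slope_sq_le :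
    (∫ x in Ioc 0 1, w x ^ 2) + ∫ p in Ioc 0 1 ×ˢ Ioc 0 1, slope w p.1 p.2 ^ 2 ≤
      3584 * weightedEnergy w w' := by
  have hmiddle := setIntegral_le_mul_weightedEnergy hwc hw' (f := fun y => w y ^ 2)
    (by norm_num : (0 : ℝ) ≤ 1 / 4) (by norm_num : (3 / 4 : ℝ) ≤ 1) (by norm_num : (0 : ℝ) ≤ 4)
    (by fun_prop) fun x hx => by
      have hρ : 1 / 4 ≤ min x (1 - x) := le_min hx.1.le (by linarith [hx.2])
      nlinarith [mul_le_mul_of_nonneg_right hρ (add_nonneg (sq_nonneg (w x)) (sq_nonneg (w' x)))]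
  linarith [integral_sq_le_blockSlopeSq hwc hw hw', setIntegral_slope_sq_le_blockSlopeSq hwc hw hw',
    setIntegral_blockSlopeSq_le hwc hw hw']

end UnitInterval

/-- Weighted Sobolev embedding (3.1) of the paper: with `ρ₀ x = min x (1-x)`,
`‖w‖²_{H^{1/2}(0,1)} ≤ C ∫₀¹ ρ₀ (w² + w'²)`, where the `H^{1/2}` norm is
`‖w‖²_{L²} + ∫∫ |w(x)-w(y)|²/|x-y|²`. -/
theorem weighted_Hhalf_embedding :
    ∃ C : ℝ, 0 < C ∧
      ∀ w w' : ℝ → ℝ,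
        (∀ x ∈ Icc (0:ℝ) 1, HasDerivWithinAt w (w' x) (Icc (0:ℝ) 1) x) →
        ContinuousOn w' (Icc (0:ℝ) 1) →
        (∫ x in (0:ℝ)..1, (w x) ^ 2) +
          (∫ x in (0:ℝ)..1, ∫ y in (0:ℝ)..1, (w x - w y) ^ 2 / |x - y| ^ 2) ≤
        C * ∫ x in (0:ℝ)..1, min x (1 - x) * ((w x) ^ 2 + (w' x) ^ 2) := by
  refine ⟨3584, by norm_num, fun w w' hw hw' => ?_⟩
  -- the integrals only see `w` on `[0,1]`; a continuous extension makes the kernel measurable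
  set v := IccExtend (zero_le_one' ℝ) ((Icc 0 1).domRestrict w)
  have hvw : EqOn v w (Icc 0 1) := fun x hx => IccExtend_of_mem _ _ hx
  have hv : Continuous v := continuous_IccExtend_iff.mpr
    (ContinuousOn.domRestrict fun x hx => (hw x hx).continuousWithinAt)
  have hvder : ∀ x ∈ Icc (0 : ℝ) 1, HasDerivWithinAt v (w' x) (Icc 0 1) x :=
    fun x hx => (hw x hx).congr hvw (hvw hx)
  have hvw' : ∀ x ∈ Ioc (0 : ℝ) 1, v x = w x := fun x hx => hvw (Ioc_subset_Icc_self hx)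
  have key := integral_sq_add_setIntegral_slope_sq_le hv hvder hw'
  rw [Measure.volume_eq_prod, setIntegral_prod _ (by
    rw [← Measure.volume_eq_prod]; exact integrableOn_Ioc_prod_slope_sq hv hvder hw'),
    weightedEnergy] at key
  simp only [intervalIntegral.integral_of_le zero_le_one]
  convert key using 2
  · exact setIntegral_congr_fun measurableSet_Ioc fun x hx => by rw [hvw' x hx]
  · refine setIntegral_congr_fun measurableSet_Ioc fun x hx => ?_
    refine setIntegral_congr_fun measurableSet_Ioc fun y hy => ?_
    rw [slope_sq_eq, hvw' x hx, hvw' y hy]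
  · exact setIntegral_congr_fun measurableSet_Ioc fun x hx => by rw [hvw' x hx]
end
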